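/- arXiv:2401.05740 — 4 statements merged into one kernel-verified Lean document; each statement's English description precedes it below -/
import Mathlib

section
/- For every instance of the related machine scheduling game with exactly m = 2 machines, every pure Nash equilibrium τ and every schedule σ satisfy SC(τ) ≤ (3/2)·SC(σ). In particular, the pure price of anarchy of the two-machine game Q2||ΣC_j is at most 3/2. -/
open Finset

/-- Completion time of job `j` under schedule `τ`: jobs are processed in SPT order
(ties broken by index), so `C_j(τ) = (∑_{k ≤ j, τ_k = τ_j} p_k) / s_{τ_j}`. -/
noncomputable def completionTime {n m : ℕ} (p : Fin n → ℝ) (s : Fin m → ℝ)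
    (τ : Fin n → Fin m) (j : Fin n) : ℝ :=
  (∑ k ∈ univ.filter (fun k => k ≤ j ∧ τ k = τ j), p k) / s (τ j)

/-- Social cost: sum of completion times. -/
noncomputable def socialCost {n m : ℕ} (p : Fin n → ℝ) (s : Fin m → ℝ)
    (τ : Fin n → Fin m) : ℝ :=
  ∑ j, completionTime p s τ j

/-- `τ` is a pure Nash equilibrium: no job can decrease its completion time by
moving to another machine. -/
def IsNash {n m : ℕ} (p : Fin n → ℝ) (s : Fin m → ℝ) (τ : Fin n → Fin m) : Prop :=
  ∀ (j : Fin n) (i : Fin m),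
    completionTime p s τ j ≤
      (p j + ∑ k ∈ univ.filter (fun k => k < j ∧ τ k = i), p k) / s i

/-- `ψ_i(τ, j)`: the number of jobs on machine `i` in schedule `τ` with strictly
lower priority than job `j`. -/
def psi {n m : ℕ} (τ : Fin n → Fin m) (i : Fin m) (j : Fin n) : ℕ :=
  (univ.filter (fun k => j < k ∧ τ k = i)).card

/-! ### Auxiliary lemmas -/

private lemma fin2_resolve {f o : Fin 2} (hfo : f ≠ o) (i : Fin 2) : (¬ i = f) ↔ i = o := by
  fin_cases f <;> fin_cases o <;> fin_cases i <;> simp_all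

private lemma sum_filter_val_ge (n k : ℕ) (h : ℕ → ℝ) :
    ∑ j ∈ univ.filter (fun j : Fin n => k ≤ j.val), h j.val
      = ∑ q ∈ Finset.range (n - k), h (q + k) := by
  refine Finset.sum_bij' (i := fun j _ => j.val - k)
    (j := fun q hq => ⟨q + k, by simp only [mem_range] at hq; omega⟩) ?_ ?_ ?_ ?_ ?_
  · intro a ha
    have h2 := a.isLt
    simp only [mem_filter, mem_univ, true_and] at ha
    simp only [mem_range]; omega
  · intro a ha
    simp only [mem_range] at ha
    simp only [mem_filter, mem_univ, true_and]; omega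
  · intro a ha
    simp only [mem_filter, mem_univ, true_and] at ha
    apply Fin.ext; dsimp only; omega
  · intro a ha
    simp only [mem_range] at ha
    dsimp only
    omega
  · intro a ha
    simp only [mem_filter, mem_univ, true_and] at ha
    congr 1; omega

private lemma card_filter_le_val (n k : ℕ) :
    (univ.filter (fun j : Fin n => k ≤ j.val)).card = n - k := by
  have h := sum_filter_val_ge n k (fun _ => (1:ℝ))
  simp only [sum_const, card_range, nsmul_eq_mul, mul_one] at h
  exact_mod_cast h

private lemma card_pairs_lt {α : Type*} [LinearOrder α] (A : Finset α) :
    2 * ((A ×ˢ A).filter (fun p => p.1 < p.2)).card + A.card = A.card * A.card := by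
  classical
  have h1 : ((A ×ˢ A).filter (fun p => p.1 < p.2)).card
      + ((A ×ˢ A).filter (fun p => ¬ p.1 < p.2)).card
      = (A ×ˢ A).card := card_filter_add_card_filter_not _
  have h2 : (A ×ˢ A).filter (fun p => ¬ p.1 < p.2)
      = (A ×ˢ A).filter (fun p => p.2 < p.1) ∪ (A ×ˢ A).filter (fun p => p.1 = p.2) := by
    rw [← filter_or]
    apply filter_congr
    intro p _
    constructor
    · intro h
      rcases lt_or_eq_of_le (not_lt.mp h) with h' | h'
      · exact Or.inl h'
      · exact Or.inr h'.symm
    · intro h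
      rcases h with h | h
      · exact not_lt.mpr h.le
      · exact not_lt.mpr h.ge
  have h3 : Disjoint ((A ×ˢ A).filter (fun p => p.2 < p.1))
      ((A ×ˢ A).filter (fun p => p.1 = p.2)) := by
    rw [disjoint_left]
    intro p hp hq
    simp only [mem_filter] at hp hq
    exact absurd hq.2 (ne_of_gt hp.2)
  have h4 : ((A ×ˢ A).filter (fun p => p.2 < p.1)).card
      = ((A ×ˢ A).filter (fun p => p.1 < p.2)).card := by
    refine Finset.card_nbij' (i := fun p => (p.2, p.1)) (j := fun p => (p.2, p.1)) ?_ ?_ ?_ ?_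
    · intro a ha
      simp only [mem_coe, mem_filter, mem_product] at ha ⊢
      exact ⟨⟨ha.1.2, ha.1.1⟩, ha.2⟩
    · intro a ha
      simp only [mem_coe, mem_filter, mem_product] at ha ⊢
      exact ⟨⟨ha.1.2, ha.1.1⟩, ha.2⟩
    · intro a _; rfl
    · intro a _; rfl
  have h5 : ((A ×ˢ A).filter (fun p => p.1 = p.2)).card = A.card := by
    refine Finset.card_nbij' (i := fun p => p.1) (j := fun a => (a, a)) ?_ ?_ ?_ ?_
    · intro a ha
      simp only [mem_coe, mem_filter, mem_product] at ha
      exact ha.1.1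
    · intro a ha
      simp only [mem_coe, mem_filter, mem_product]
      exact ⟨⟨ha, ha⟩, trivial⟩
    · intro a ha
      simp only [mem_coe, mem_filter, mem_product] at ha
      obtain ⟨x, y⟩ := a
      simp only [Prod.mk.injEq]
      exact ⟨trivial, ha.2⟩
    · intro a _; rfl
  have h6 : (A ×ˢ A).card = A.card * A.card := by rw [card_product]
  rw [h2, card_union_of_disjoint h3, h4, h5, h6] at h1
  omega

private lemma sum_rank {α : Type*} [LinearOrder α] (A : Finset α) :
    2 * (∑ j ∈ A, (1 + (A.filter (fun x => j < x)).card)) = A.card * A.card + A.card := by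
  classical
  have hfib : ((A ×ˢ A).filter (fun p => p.1 < p.2)).card
      = ∑ j ∈ A, (A.filter (fun x => j < x)).card := by
    rw [Finset.card_eq_sum_card_fiberwise (f := Prod.fst) (t := A)
      (fun p hp => (mem_product.mp (mem_filter.mp hp).1).1)]
    refine sum_congr rfl fun j hj => ?_
    refine Finset.card_nbij' (i := fun p => p.2) (j := fun x => (j, x)) ?_ ?_ ?_ ?_
    · intro a ha
      simp only [mem_coe, mem_filter, mem_product] at ha ⊢
      refine ⟨ha.1.1.2, ?_⟩
      rw [← ha.2]; exact ha.1.2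
    · intro a ha
      simp only [mem_coe, mem_filter, mem_product] at ha ⊢
      exact ⟨⟨⟨hj, ha.1⟩, ha.2⟩, trivial⟩
    · intro a ha
      simp only [mem_coe, mem_filter, mem_product] at ha
      obtain ⟨x, y⟩ := a
      simp only [Prod.mk.injEq]
      exact ⟨ha.2.symm, trivial⟩
    · intro a _; rfl
  rw [sum_add_distrib, sum_const, smul_eq_mul, mul_one]
  have := card_pairs_lt A
  omega

private lemma socialCost_eq {n m : ℕ} (p : Fin n → ℝ) (s : Fin m → ℝ) (σ : Fin n → Fin m) :
    socialCost p s σ = ∑ k, p k * ((1 + (psi σ (σ k) k : ℝ)) / s (σ k)) := by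
  classical
  unfold socialCost completionTime
  have step1 : ∀ j : Fin n,
      (∑ k ∈ univ.filter (fun k => k ≤ j ∧ σ k = σ j), p k) / s (σ j)
      = ∑ k, if k ≤ j ∧ σ k = σ j then p k / s (σ k) else 0 := by
    intro j
    rw [sum_div, sum_filter]
    refine sum_congr rfl fun k _ => ?_
    split_ifs with h
    · rw [h.2]
    · rfl
  rw [sum_congr rfl fun j _ => step1 j, Finset.sum_comm]
  refine sum_congr rfl fun k _ => ?_
  have step2 : ∀ j : Fin n, (if k ≤ j ∧ σ k = σ j then p k / s (σ k) else 0)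
      = if k ≤ j ∧ σ k = σ j then (fun _ : Fin n => p k / s (σ k)) j else 0 := fun j => rfl
  rw [sum_congr rfl fun j _ => step2 j, ← sum_filter, sum_const, nsmul_eq_mul]
  have hcard : (univ.filter (fun j : Fin n => k ≤ j ∧ σ k = σ j)).card
      = 1 + psi σ (σ k) k := by
    have hset : univ.filter (fun j : Fin n => k ≤ j ∧ σ k = σ j)
        = insert k (univ.filter (fun j : Fin n => k < j ∧ σ j = σ k)) := by
      ext j
      simp only [mem_filter, mem_univ, true_and, mem_insert]
      constructor
      · rintro ⟨h1, h2⟩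
        rcases eq_or_lt_of_le h1 with h' | h'
        · exact Or.inl h'.symm
        · exact Or.inr ⟨h', h2.symm⟩
      · rintro (h | ⟨h1, h2⟩)
        · subst h; exact ⟨le_refl _, rfl⟩
        · exact ⟨h1.le, h2.symm⟩
    rw [hset, card_insert_of_notMem (by simp)]
    unfold psi
    omega
  rw [hcard]
  push_cast
  ring

private lemma abel_le {n : ℕ} (p : Fin n → ℝ) (hp : ∀ j, 0 ≤ p j) (hmono : Monotone p)
    (u v : Fin n → ℝ)
    (h : ∀ k, k < n → ∑ j ∈ univ.filter (fun j : Fin n => k ≤ j.val), u j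
        ≤ ∑ j ∈ univ.filter (fun j : Fin n => k ≤ j.val), v j) :
    ∑ j, p j * u j ≤ ∑ j, p j * v j := by
  classical
  set F : ℕ → ℝ := fun t => match t with
    | 0 => 0
    | (t+1) => if ht : t < n then p ⟨t, ht⟩ else 0 with hF
  set d : ℕ → ℝ := fun t => F (t+1) - F t with hd
  have hpd : ∀ j : Fin n, p j = ∑ t ∈ Finset.range (j.val+1), d t := by
    intro j
    rw [hd, Finset.sum_range_sub F]
    simp only [hF, j.isLt, dite_true, sub_zero]
  have hd0 : ∀ t, t < n → 0 ≤ d t := by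
    intro t ht
    rcases t with _ | t
    · simpa [hd, hF, ht] using hp ⟨0, ht⟩
    · have h1 : t < n := Nat.lt_of_succ_lt ht
      have he : d (t+1) = p ⟨t+1, ht⟩ - p ⟨t, h1⟩ := by
        simp only [hd, hF, ht, h1, dite_true]
      rw [he, sub_nonneg]
      exact hmono (by simp only [Fin.mk_le_mk]; omega)
  have key : 0 ≤ ∑ j, p j * (v j - u j) := by
    have expand : ∑ j, p j * (v j - u j)
        = ∑ t ∈ Finset.range n, d t *
            (∑ j ∈ univ.filter (fun j : Fin n => t ≤ j.val), (v j - u j)) := by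
      have e1 : ∀ j : Fin n, p j * (v j - u j)
          = ∑ t ∈ Finset.range n, (if t ≤ j.val then d t * (v j - u j) else 0) := by
        intro j
        have e2 : ∑ t ∈ Finset.range n, (if t ≤ j.val then d t * (v j - u j) else 0)
            = ∑ t ∈ Finset.range (j.val+1), (if t ≤ j.val then d t * (v j - u j) else 0) := by
          refine (Finset.sum_subset ?_ ?_).symm
          · exact Finset.range_subset_range.mpr j.isLt
          · intro x hx hnx
            simp only [mem_range] at hx hnx
            rw [if_neg (by omega)]
        rw [e2, hpd j, Finset.sum_mul]
        refine sum_congr rfl fun t ht => ?_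
        simp only [mem_range] at ht
        rw [if_pos (by omega)]
      rw [sum_congr rfl fun j _ => e1 j, Finset.sum_comm]
      refine sum_congr rfl fun t _ => ?_
      rw [Finset.mul_sum, ← Finset.sum_filter]
    rw [expand]
    refine Finset.sum_nonneg fun t ht => ?_
    simp only [mem_range] at ht
    refine mul_nonneg (hd0 t ht) ?_
    rw [Finset.sum_sub_distrib, sub_nonneg]
    exact h t ht
  have final : ∑ j, p j * (v j - u j) = ∑ j, p j * v j - ∑ j, p j * u j := by
    rw [← Finset.sum_sub_distrib]
    exact sum_congr rfl fun j _ => by ring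
  linarith [key, final.symm.le]

private lemma numB (x y A B : ℝ) (hx : 0 < x) (hy : 0 < y) (h3 : 3 * x ≤ y)
    (hA0 : 0 ≤ A) (hB0 : 0 ≤ B) :
    ((A+B)^2 + (A+B)) / (2*y) ≤ (3/2) * ((A^2+A)/(2*x) + (B^2+B)/(2*y)) := by
  have e1 : (3:ℝ)/2 * ((A^2+A)/(2*x) + (B^2+B)/(2*y))
      = (3*((A^2+A)*y + (B^2+B)*x)) / (4*(x*y)) := by
    field_simp
    ring
  rw [e1, div_le_div_iff₀ (by positivity) (by positivity)]
  have h4 : (0:ℝ) ≤ 18*(A^2+A) + 6*(B^2+B) - 4*((A+B)^2 + (A+B)) := by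
    nlinarith [sq_nonneg (2*A - B), hA0, hB0]
  nlinarith [mul_nonneg (mul_nonneg hx.le hy.le) h4,
    mul_nonneg (mul_nonneg (by nlinarith [sq_nonneg A] : (0:ℝ) ≤ A^2 + A) hy.le)
      (sub_nonneg.mpr h3), hx, hy]

set_option maxHeartbeats 1600000 in
private lemma numA (x y A B : ℝ) (hx : 0 < x) (hy : 0 < y)
    (hyx : y ≤ 3*x) (hxy : x ≤ 3*y)
    (hA : A = 0 ∨ 1 ≤ A) (hB : B = 0 ∨ 1 ≤ B) :
    ((A+B)^2 + 3*(A+B)) / (2*(x+y)) ≤ (3/2) * ((A^2+A)/(2*x) + (B^2+B)/(2*y)) := by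
  have e1 : (3:ℝ)/2 * ((A^2+A)/(2*x) + (B^2+B)/(2*y))
      = (3*((A^2+A)*y + (B^2+B)*x)) / (4*(x*y)) := by
    field_simp
    ring
  rw [e1, div_le_div_iff₀ (by positivity) (by positivity)]
  rcases hA with hA | hA
  · subst hA
    rcases hB with hB | hB
    · subst hB; norm_num
    · have hβ : (0:ℝ) ≤ B^2 + B := by nlinarith
      have P1 : (0:ℝ) ≤ (B^2+B)*x*(3*x - y) :=
        mul_nonneg (mul_nonneg hβ hx.le) (by linarith)
      have P2 : (0:ℝ) ≤ (B^2-B)*(x*y) :=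
        mul_nonneg (by nlinarith) (mul_nonneg hx.le hy.le)
      nlinarith [P1, P2]
  · rcases hB with hB | hB
    · subst hB
      have hα : (0:ℝ) ≤ A^2 + A := by nlinarith
      have P1 : (0:ℝ) ≤ (A^2+A)*y*(3*y - x) :=
        mul_nonneg (mul_nonneg hα hy.le) (by linarith)
      have P2 : (0:ℝ) ≤ (A^2-A)*(x*y) :=
        mul_nonneg (by nlinarith) (mul_nonneg hx.le hy.le)
      nlinarith [P1, P2]
    · obtain ⟨W, hW⟩ : ∃ w : ℝ, w = 2*A*B + (3/2)*(A+B) - (A^2+B^2)/2 := ⟨_, rfl⟩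
      have hred : ((A+B)^2 + 3*(A+B)) * (4*(x*y)) - 3*((A^2+A)*y + (B^2+B)*x) * (2*(x+y))
          = 4*W*(x*y) - 6*((A^2+A)*y^2 + (B^2+B)*x^2) := by
        rw [hW]; ring
      rw [← sub_nonpos, hred, sub_nonpos]
      have hα : (0:ℝ) ≤ A^2 + A := by nlinarith
      have hβ : (0:ℝ) ≤ B^2 + B := by nlinarith
      rcases le_or_gt W 0 with hW0 | hW0
      · have h1 : 4*W*(x*y) ≤ 0 := by
          apply mul_nonpos_of_nonpos_of_nonneg
          · linarith
          · positivity
        have h2 : (0:ℝ) ≤ 6*((A^2+A)*y^2 + (B^2+B)*x^2) := by positivity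
        linarith
      · have hs' : A + B ≤ A*B + 1 := by
          nlinarith [mul_nonneg (sub_nonneg.mpr hA) (sub_nonneg.mpr hB)]
        have hWle : W ≤ A*B + (3/2)*(A+B) := by
          rw [hW]; nlinarith [sq_nonneg (A-B)]
        have hP1 : 1 ≤ A*B := by nlinarith
        have hs2 : 2 ≤ A + B := by linarith
        have haux : ∀ P S : ℝ, 1 ≤ P → 2 ≤ S → S ≤ P + 1 →
            (P + (3/2)*S)^2 ≤ 9*(P*(P+S+1)) := by
          intro P S h1 h2 h3
          nlinarith [mul_nonneg (by linarith : (0:ℝ) ≤ S) (by linarith : (0:ℝ) ≤ P+1-S),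
            mul_nonneg (by linarith : (0:ℝ) ≤ P) (by linarith : (0:ℝ) ≤ S)]
        have hK : W^2 ≤ 9*((A^2+A)*(B^2+B)) := by
          have h9' := haux (A*B) (A+B) hP1 hs2 (by linarith)
          have e9 : 9*((A^2+A)*(B^2+B)) = 9*((A*B)*((A*B)+(A+B)+1)) := by ring
          have hWsq : W^2 ≤ (A*B + (3/2)*(A+B))^2 := by
            nlinarith [mul_self_le_mul_self hW0.le hWle]
          rw [e9]; linarith
        have h1 : (0:ℝ) ≤ 9*((A^2+A)*(B^2+B)) - W^2 := by linarith
        have e2 : (6*((A^2+A)*y^2 + (B^2+B)*x^2))^2 - (4*W*(x*y))^2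
            = 36*((A^2+A)*y^2 - (B^2+B)*x^2)^2
              + 16*(9*((A^2+A)*(B^2+B)) - W^2)*(x*y)^2 := by ring
        have hsq : (4*W*(x*y))^2 ≤ (6*((A^2+A)*y^2 + (B^2+B)*x^2))^2 := by
          nlinarith [sq_nonneg ((A^2+A)*y^2 - (B^2+B)*x^2),
            mul_nonneg h1 (sq_nonneg (x*y)), e2.ge, e2.le]
        have h6 : (0:ℝ) ≤ 6*((A^2+A)*y^2 + (B^2+B)*x^2) := by positivity
        exact le_of_pow_le_pow_left₀ (by norm_num) h6 hsq

private lemma sum_prefix {n : ℕ} (p : Fin n → ℝ) :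
    ∑ j : Fin n, ∑ k ∈ univ.filter (fun k => k < j), p k
      = ∑ k : Fin n, p k * ((n:ℝ) - 1 - k.val) := by
  have e1 : ∀ j : Fin n, ∑ k ∈ univ.filter (fun k => k < j), p k
      = ∑ k : Fin n, if k < j then p k else 0 := fun j => by rw [sum_filter]
  rw [sum_congr rfl fun j _ => e1 j, Finset.sum_comm]
  refine sum_congr rfl fun k _ => ?_
  have e2 : ∀ j : Fin n, (if k < j then p k else 0)
      = if k < j then (fun _ : Fin n => p k) j else 0 := fun j => rfl
  rw [sum_congr rfl fun j _ => e2 j, ← sum_filter, sum_const, nsmul_eq_mul]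
  have hc : (univ.filter (fun j : Fin n => k < j)).card = n - (k.val + 1) := by
    rw [← card_filter_le_val n (k.val + 1)]
    congr 1
  rw [hc]
  have hcast : ((n - (k.val + 1) : ℕ) : ℝ) = (n:ℝ) - 1 - k.val := by
    have := k.isLt
    rw [Nat.cast_sub (by omega : k.val + 1 ≤ n)]
    push_cast
    ring
  rw [hcast]
  ring

private lemma nash_upper_A {n : ℕ} (p : Fin n → ℝ) (s : Fin 2 → ℝ)
    (hs : ∀ i, 0 < s i) (τ : Fin n → Fin 2) (hτ : IsNash p s τ) :
    socialCost p s τ ≤ ∑ j, p j * (((n:ℝ) - j.val + 1) / (s 0 + s 1)) := by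
  have hS : 0 < s 0 + s 1 := by linarith [hs 0, hs 1]
  have hper : ∀ j : Fin n, completionTime p s τ j
      ≤ (2 * p j + ∑ k ∈ univ.filter (fun k => k < j), p k) / (s 0 + s 1) := by
    intro j
    have h0 := hτ j 0
    have h1 := hτ j 1
    rw [le_div_iff₀ (hs 0)] at h0
    rw [le_div_iff₀ (hs 1)] at h1
    rw [le_div_iff₀ hS]
    have hsplit := sum_filter_add_sum_filter_not (univ.filter (fun k => k < j))
      (fun k => τ k = 0) p
    rw [filter_filter, filter_filter] at hsplit
    have hco : (univ.filter fun k : Fin n => k < j ∧ ¬ τ k = 0)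
        = (univ.filter fun k : Fin n => k < j ∧ τ k = 1) := by
      apply filter_congr
      intro x _
      constructor
      · rintro ⟨h1', h2'⟩; exact ⟨h1', (fin2_resolve (by decide) (τ x)).mp h2'⟩
      · rintro ⟨h1', h2'⟩; exact ⟨h1', (fin2_resolve (by decide) (τ x)).mpr h2'⟩
    rw [hco] at hsplit
    linarith [h0, h1, hsplit]
  calc socialCost p s τ
      ≤ ∑ j, (2 * p j + ∑ k ∈ univ.filter (fun k => k < j), p k) / (s 0 + s 1) :=
        sum_le_sum fun j _ => hper j
    _ = ∑ j, p j * (((n:ℝ) - j.val + 1) / (s 0 + s 1)) := by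
        rw [← sum_div]
        have e3 : ∑ j, p j * (((n:ℝ) - j.val + 1) / (s 0 + s 1))
            = (∑ j, p j * ((n:ℝ) - j.val + 1)) / (s 0 + s 1) := by
          rw [sum_div]
          exact sum_congr rfl fun j _ => by ring
        rw [e3]
        congr 1
        rw [sum_add_distrib, sum_prefix p, ← sum_add_distrib]
        exact sum_congr rfl fun j _ => by ring

private lemma nash_upper_B {n : ℕ} (p : Fin n → ℝ) (s : Fin 2 → ℝ) (hp : ∀ j, 0 ≤ p j)
    (hs : ∀ i, 0 < s i) (τ : Fin n → Fin 2) (hτ : IsNash p s τ) (f : Fin 2) :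
    socialCost p s τ ≤ ∑ j, p j * (((n:ℝ) - j.val) / s f) := by
  have hper : ∀ j : Fin n, completionTime p s τ j
      ≤ (p j + ∑ k ∈ univ.filter (fun k => k < j), p k) / s f := by
    intro j
    refine (hτ j f).trans ((div_le_div_iff_of_pos_right (hs f)).mpr (add_le_add_right ?_ (p j)))
    refine sum_le_sum_of_subset_of_nonneg ?_ (fun k _ _ => hp k)
    intro x hx
    simp only [mem_filter, mem_univ, true_and] at hx ⊢
    exact hx.1
  calc socialCost p s τ
      ≤ ∑ j, (p j + ∑ k ∈ univ.filter (fun k => k < j), p k) / s f :=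
        sum_le_sum fun j _ => hper j
    _ = ∑ j, p j * (((n:ℝ) - j.val) / s f) := by
        rw [← sum_div]
        have e3 : ∑ j, p j * (((n:ℝ) - j.val) / s f)
            = (∑ j, p j * ((n:ℝ) - j.val)) / s f := by
          rw [sum_div]
          exact sum_congr rfl fun j _ => by ring
        rw [e3]
        congr 1
        rw [sum_add_distrib, sum_prefix p, ← sum_add_distrib]
        exact sum_congr rfl fun j _ => by ring

private lemma sigma_suffix {n : ℕ} (s : Fin 2 → ℝ) (σ : Fin n → Fin 2)
    (f o : Fin 2) (hfo : f ≠ o) (k : ℕ) :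
    ∑ j ∈ univ.filter (fun j : Fin n => k ≤ j.val), (1 + (psi σ (σ j) j : ℝ)) / s (σ j)
      = (((univ.filter (fun j : Fin n => k ≤ j.val ∧ σ j = f)).card : ℝ)^2
          + ((univ.filter (fun j : Fin n => k ≤ j.val ∧ σ j = f)).card : ℝ)) / (2 * s f)
        + (((univ.filter (fun j : Fin n => k ≤ j.val ∧ σ j = o)).card : ℝ)^2
          + ((univ.filter (fun j : Fin n => k ≤ j.val ∧ σ j = o)).card : ℝ)) / (2 * s o) := by
  classical
  have hmach : ∀ i : Fin 2,
      ∑ j ∈ univ.filter (fun j : Fin n => k ≤ j.val ∧ σ j = i),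
        (1 + (psi σ (σ j) j : ℝ)) / s (σ j)
      = (((univ.filter (fun j : Fin n => k ≤ j.val ∧ σ j = i)).card : ℝ)^2
          + ((univ.filter (fun j : Fin n => k ≤ j.val ∧ σ j = i)).card : ℝ)) / (2 * s i) := by
    intro i
    have step1 : ∑ j ∈ univ.filter (fun j : Fin n => k ≤ j.val ∧ σ j = i),
        (1 + (psi σ (σ j) j : ℝ)) / s (σ j)
        = ∑ j ∈ univ.filter (fun j : Fin n => k ≤ j.val ∧ σ j = i),
          ((1 + ((univ.filter (fun j : Fin n => k ≤ j.val ∧ σ j = i)).filter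
              (fun x => j < x)).card : ℕ) : ℝ) / s i := by
      refine sum_congr rfl fun j hj => ?_
      simp only [mem_filter, mem_univ, true_and] at hj
      have hpsi : psi σ (σ j) j
          = ((univ.filter (fun j : Fin n => k ≤ j.val ∧ σ j = i)).filter
              (fun x => j < x)).card := by
        rw [hj.2]
        unfold psi
        congr 1
        rw [filter_filter]
        apply filter_congr
        intro x _
        have hjk := hj.1
        constructor
        · rintro ⟨h1, h2⟩
          have : k ≤ x.val := le_trans hjk (le_of_lt (Fin.lt_def.mp h1))
          exact ⟨⟨this, h2⟩, h1⟩
        · rintro ⟨⟨_, h2⟩, h1⟩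
          exact ⟨h1, h2⟩
      rw [hpsi, hj.2]
      push_cast
      ring
    rw [step1, ← sum_div]
    have hcast : ∑ j ∈ univ.filter (fun j : Fin n => k ≤ j.val ∧ σ j = i),
        ((1 + ((univ.filter (fun j : Fin n => k ≤ j.val ∧ σ j = i)).filter
            (fun x => j < x)).card : ℕ) : ℝ)
        = (((∑ j ∈ univ.filter (fun j : Fin n => k ≤ j.val ∧ σ j = i),
            (1 + ((univ.filter (fun j : Fin n => k ≤ j.val ∧ σ j = i)).filter
              (fun x => j < x)).card)) : ℕ) : ℝ) := by
      rw [Nat.cast_sum]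
    rw [hcast]
    have hrank := sum_rank (univ.filter (fun j : Fin n => k ≤ j.val ∧ σ j = i))
    have hr : ((∑ j ∈ univ.filter (fun j : Fin n => k ≤ j.val ∧ σ j = i),
        (1 + ((univ.filter (fun j : Fin n => k ≤ j.val ∧ σ j = i)).filter
          (fun x => j < x)).card) : ℕ) : ℝ)
        = (((univ.filter (fun j : Fin n => k ≤ j.val ∧ σ j = i)).card : ℝ)^2
          + ((univ.filter (fun j : Fin n => k ≤ j.val ∧ σ j = i)).card : ℝ)) / 2 := by
      rw [eq_div_iff (by norm_num : (2:ℝ) ≠ 0)]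
      have h2 : (∑ j ∈ univ.filter (fun j : Fin n => k ≤ j.val ∧ σ j = i),
          (1 + ((univ.filter (fun j : Fin n => k ≤ j.val ∧ σ j = i)).filter
            (fun x => j < x)).card)) * 2
          = (univ.filter (fun j : Fin n => k ≤ j.val ∧ σ j = i)).card ^ 2
            + (univ.filter (fun j : Fin n => k ≤ j.val ∧ σ j = i)).card := by
        rw [pow_two]
        omega
      exact_mod_cast h2
    rw [hr, div_div]
  have hsplit := sum_filter_add_sum_filter_not (univ.filter (fun j : Fin n => k ≤ j.val))
    (fun j => σ j = f) (fun j => (1 + (psi σ (σ j) j : ℝ)) / s (σ j))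
  rw [filter_filter, filter_filter] at hsplit
  have hco : (univ.filter fun j : Fin n => k ≤ j.val ∧ ¬ σ j = f)
      = (univ.filter fun j : Fin n => k ≤ j.val ∧ σ j = o) := by
    apply filter_congr
    intro x _
    constructor
    · rintro ⟨h1', h2'⟩; exact ⟨h1', (fin2_resolve hfo (σ x)).mp h2'⟩
    · rintro ⟨h1', h2'⟩; exact ⟨h1', (fin2_resolve hfo (σ x)).mpr h2'⟩
  rw [hco] at hsplit
  rw [← hsplit, hmach f, hmach o]

private lemma card_machine_split {n : ℕ} (σ : Fin n → Fin 2) (f o : Fin 2) (hfo : f ≠ o)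
    (k : ℕ) :
    (univ.filter (fun j : Fin n => k ≤ j.val ∧ σ j = f)).card
      + (univ.filter (fun j : Fin n => k ≤ j.val ∧ σ j = o)).card = n - k := by
  classical
  have h := card_filter_add_card_filter_not
    (s := univ.filter (fun j : Fin n => k ≤ j.val)) (p := fun j => σ j = f)
  rw [filter_filter, filter_filter] at h
  have hco : (univ.filter fun j : Fin n => k ≤ j.val ∧ ¬ σ j = f)
      = (univ.filter fun j : Fin n => k ≤ j.val ∧ σ j = o) := by
    apply filter_congr
    intro x _
    constructor
    · rintro ⟨h1', h2'⟩; exact ⟨h1', (fin2_resolve hfo (σ x)).mp h2'⟩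
    · rintro ⟨h1', h2'⟩; exact ⟨h1', (fin2_resolve hfo (σ x)).mpr h2'⟩
  rw [hco, card_filter_le_val] at h
  exact h

private lemma sum_range_cast (m : ℕ) :
    ∑ q ∈ Finset.range m, (q : ℝ) = (m:ℝ) * ((m:ℝ) - 1) / 2 := by
  induction m with
  | zero => simp
  | succ m ih =>
    rw [Finset.sum_range_succ, ih]
    push_cast
    ring

private lemma range_sum_eval (m : ℕ) (c0 : ℝ) :
    ∑ q ∈ Finset.range m, ((m:ℝ) - q + c0) = ((m:ℝ)^2 + (2*c0+1)*(m:ℝ))/2 := by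
  have e1 : ∀ q : ℕ, ((m:ℝ) - q + c0) = ((m:ℝ) + c0) - (q:ℝ) := fun q => by ring
  rw [sum_congr rfl fun q _ => e1 q, Finset.sum_sub_distrib, sum_const, card_range,
    nsmul_eq_mul, sum_range_cast]
  ring

/-- Theorem 3: the pure price of anarchy for `Q2||ΣC_j` (two related machines)
is at most `3/2`: every pure Nash equilibrium `τ` and every schedule `σ` satisfy
`SC(τ) ≤ (3/2)·SC(σ)`. -/
theorem poa_two_machines (n : ℕ) (p : Fin n → ℝ) (s : Fin 2 → ℝ)
    (hp : ∀ j, 0 < p j) (hpmono : Monotone p) (hs : ∀ i, 0 < s i)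
    (τ σ : Fin n → Fin 2) (hτ : IsNash p s τ) :
    socialCost p s τ ≤ (3 / 2) * socialCost p s σ := by
  classical
  have hp0 : ∀ j, 0 ≤ p j := fun j => (hp j).le
  have hL1 := socialCost_eq p s σ
  -- generic reduction: an upper bound by coefficients plus suffix-sum domination suffices
  have hmaster : ∀ u : Fin n → ℝ,
      socialCost p s τ ≤ (∑ j, p j * u j) →
      (∀ k : ℕ, k < n → ∑ j ∈ univ.filter (fun j : Fin n => k ≤ j.val), u j
        ≤ (3/2) * ∑ j ∈ univ.filter (fun j : Fin n => k ≤ j.val),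
            (1 + (psi σ (σ j) j : ℝ)) / s (σ j)) →
      socialCost p s τ ≤ (3 / 2) * socialCost p s σ := by
    intro u hub hsuf
    have hsuf' : ∀ k, k < n → ∑ j ∈ univ.filter (fun j : Fin n => k ≤ j.val), u j
        ≤ ∑ j ∈ univ.filter (fun j : Fin n => k ≤ j.val),
            (3/2) * ((1 + (psi σ (σ j) j : ℝ)) / s (σ j)) := by
      intro k hk
      rw [← mul_sum]
      exact hsuf k hk
    have habel := abel_le p hp0 hpmono u
      (fun j => (3/2) * ((1 + (psi σ (σ j) j : ℝ)) / s (σ j))) hsuf'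
    calc socialCost p s τ ≤ ∑ j, p j * u j := hub
      _ ≤ ∑ j, p j * ((3/2) * ((1 + (psi σ (σ j) j : ℝ)) / s (σ j))) := habel
      _ = (3/2) * ∑ j, p j * ((1 + (psi σ (σ j) j : ℝ)) / s (σ j)) := by
          rw [mul_sum]
          exact sum_congr rfl fun j _ => by ring
      _ = (3/2) * socialCost p s σ := by rw [← hL1]
  by_cases hcase : s 1 ≤ 3 * s 0 ∧ s 0 ≤ 3 * s 1
  · -- Case A : balanced speeds, deviate to both machines
    refine hmaster (fun j => ((n:ℝ) - j.val + 1) / (s 0 + s 1))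
      (nash_upper_A p s hs τ hτ) ?_
    intro k hk
    -- evaluate LHS
    have hlhs : ∑ j ∈ univ.filter (fun j : Fin n => k ≤ j.val),
        ((n:ℝ) - j.val + 1) / (s 0 + s 1)
        = (((n-k:ℕ):ℝ)^2 + 3*((n-k:ℕ):ℝ)) / (2*(s 0 + s 1)) := by
      have e := sum_filter_val_ge n k (fun t => ((n:ℝ) - t + 1)/(s 0 + s 1))
      rw [e]
      have hnk : ((n-k:ℕ):ℝ) = (n:ℝ) - (k:ℝ) := by
        rw [Nat.cast_sub hk.le]
      have e4 : ∀ q ∈ Finset.range (n-k), ((n:ℝ) - (q+k:ℕ) + 1)/(s 0 + s 1)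
          = (((n-k:ℕ):ℝ) - q + 1)/(s 0 + s 1) := by
        intro q _
        rw [hnk]
        push_cast
        ring_nf
      rw [sum_congr rfl e4, ← sum_div, range_sum_eval, div_div]
      norm_num
    rw [hlhs, sigma_suffix s σ 0 1 (by decide) k]
    have hcards := card_machine_split σ 0 1 (by decide) k
    have hAB : ((n-k:ℕ):ℝ)
        = ((univ.filter (fun j : Fin n => k ≤ j.val ∧ σ j = 0)).card : ℝ)
          + ((univ.filter (fun j : Fin n => k ≤ j.val ∧ σ j = 1)).card : ℝ) := by
      exact_mod_cast hcards.symm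
    rw [hAB]
    have hA01 : ((univ.filter (fun j : Fin n => k ≤ j.val ∧ σ j = 0)).card : ℝ) = 0
        ∨ 1 ≤ ((univ.filter (fun j : Fin n => k ≤ j.val ∧ σ j = 0)).card : ℝ) := by
      rcases Nat.eq_zero_or_pos (univ.filter (fun j : Fin n => k ≤ j.val ∧ σ j = 0)).card
        with h | h
      · left; exact_mod_cast h
      · right; exact_mod_cast h
    have hB01 : ((univ.filter (fun j : Fin n => k ≤ j.val ∧ σ j = 1)).card : ℝ) = 0
        ∨ 1 ≤ ((univ.filter (fun j : Fin n => k ≤ j.val ∧ σ j = 1)).card : ℝ) := by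
      rcases Nat.eq_zero_or_pos (univ.filter (fun j : Fin n => k ≤ j.val ∧ σ j = 1)).card
        with h | h
      · left; exact_mod_cast h
      · right; exact_mod_cast h
    exact numA (s 0) (s 1) _ _ (hs 0) (hs 1) hcase.1 hcase.2 hA01 hB01
  · -- Case B : one machine is more than 3x faster
    have caseB : ∀ f o : Fin 2, f ≠ o → 3 * s o ≤ s f →
        socialCost p s τ ≤ (3 / 2) * socialCost p s σ := by
      intro f o hfo hso
      refine hmaster (fun j => ((n:ℝ) - j.val) / s f)
        (nash_upper_B p s hp0 hs τ hτ f) ?_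
      intro k hk
      have hlhs : ∑ j ∈ univ.filter (fun j : Fin n => k ≤ j.val),
          ((n:ℝ) - j.val) / s f
          = (((n-k:ℕ):ℝ)^2 + ((n-k:ℕ):ℝ)) / (2 * s f) := by
        have e := sum_filter_val_ge n k (fun t => ((n:ℝ) - t)/ s f)
        rw [e]
        have hnk : ((n-k:ℕ):ℝ) = (n:ℝ) - (k:ℝ) := by
          rw [Nat.cast_sub hk.le]
        have e4 : ∀ q ∈ Finset.range (n-k), ((n:ℝ) - (q+k:ℕ))/ s f
            = (((n-k:ℕ):ℝ) - q + 0)/ s f := by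
          intro q _
          rw [hnk]
          push_cast
          ring_nf
        rw [sum_congr rfl e4, ← sum_div, range_sum_eval, div_div]
        norm_num
      rw [hlhs, sigma_suffix s σ f o hfo k]
      have hcards := card_machine_split σ f o hfo k
      have hAB : ((n-k:ℕ):ℝ)
          = ((univ.filter (fun j : Fin n => k ≤ j.val ∧ σ j = o)).card : ℝ)
            + ((univ.filter (fun j : Fin n => k ≤ j.val ∧ σ j = f)).card : ℝ) := by
        rw [← hcards]
        push_cast
        ring
      rw [hAB]
      have hnum := numB (s o) (s f)
        ((univ.filter (fun j : Fin n => k ≤ j.val ∧ σ j = o)).card : ℝ)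
        ((univ.filter (fun j : Fin n => k ≤ j.val ∧ σ j = f)).card : ℝ)
        (hs o) (hs f) hso (Nat.cast_nonneg _) (Nat.cast_nonneg _)
      linarith [hnum]
    rcases not_and_or.mp hcase with h | h
    · push_neg at h
      exact caseB 1 0 (by decide) h.le
    · push_neg at h
      exact caseB 0 1 (by decide) h.le
end

section
/- Consider an instance of the related machine scheduling game with m machines whose speeds are divisible, i.e., for every pair of machines i and i' with s_{i'} ≤ s_i, the ratio s_i/s_{i'} is an integer. Then every pure Nash equilibrium τ and every schedule σ satisfy SC(τ) ≤ (2 − 1/(2m))·SC(σ). In particular, for machines with divisible speeds the pure price of anarchy of Q||ΣC_j is at most 2 − 1/(2m). -/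
open Finset

/-! ### Auxiliary greedy ("rung") machinery -/

/-- the machine whose next rung `(d i + 1)/s i` is smallest -/
noncomputable def nxt {m : ℕ} (s : Fin m → ℝ) (hm : 0 < m) (d : Fin m → ℕ) : Fin m :=
  Classical.choose (Finset.exists_min_image Finset.univ (fun i => ((d i : ℝ) + 1) / s i)
    ⟨⟨0, hm⟩, Finset.mem_univ _⟩)

lemma nxt_spec {m : ℕ} (s : Fin m → ℝ) (hm : 0 < m) (d : Fin m → ℕ) (i : Fin m) :
    ((d (nxt s hm d) : ℝ) + 1) / s (nxt s hm d) ≤ ((d i : ℝ) + 1) / s i := by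
  obtain ⟨-, h2⟩ := Classical.choose_spec (Finset.exists_min_image Finset.univ
    (fun i => ((d i : ℝ) + 1) / s i) ⟨⟨0, hm⟩, Finset.mem_univ _⟩)
  exact h2 i (mem_univ i)

/-- greedy rung counts after `t` steps -/
noncomputable def Dg {m : ℕ} (s : Fin m → ℝ) (hm : 0 < m) : ℕ → Fin m → ℕ
  | 0 => fun _ => 0
  | t+1 => fun i => Dg s hm t i + if i = nxt s hm (Dg s hm t) then 1 else 0

/-- value of the `t`-th greedy rung -/
noncomputable def gg {m : ℕ} (s : Fin m → ℝ) (hm : 0 < m) : ℕ → ℝ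
  | 0 => 0
  | t+1 => ((Dg s hm t (nxt s hm (Dg s hm t)) : ℝ) + 1) / s (nxt s hm (Dg s hm t))

/-- sum of the first `q` greedy rungs -/
noncomputable def GG {m : ℕ} (s : Fin m → ℝ) (hm : 0 < m) (q : ℕ) : ℝ :=
  ∑ r ∈ range q, gg s hm (r+1)

section greedy
variable {m : ℕ} (s : Fin m → ℝ) (hm : 0 < m)

lemma Dg_sum (t : ℕ) : ∑ i, Dg s hm t i = t := by
  induction t with
  | zero => simp [Dg]
  | succ t ih =>
      simp only [Dg, sum_add_distrib, ih, sum_ite_eq' univ (nxt s hm (Dg s hm t)) (fun _ => 1)]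
      simp

lemma gg_nonneg (hs : ∀ i, 0 < s i) (t : ℕ) : 0 ≤ gg s hm t := by
  cases t with
  | zero => simp [gg]
  | succ t =>
      apply div_nonneg _ (le_of_lt (hs _))
      positivity

lemma gg_succ_le (t : ℕ) (i : Fin m) :
    gg s hm (t+1) ≤ ((Dg s hm t i : ℝ) + 1) / s i := nxt_spec s hm (Dg s hm t) i

lemma Dg_le_succ (t : ℕ) (i : Fin m) : Dg s hm t i ≤ Dg s hm (t+1) i := by
  simp [Dg]

lemma gg_mono_step (hs : ∀ i, 0 < s i) (t : ℕ) : gg s hm t ≤ gg s hm (t+1) := by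
  cases t with
  | zero => exact gg_nonneg s hm hs 1
  | succ u =>
      refine le_trans (gg_succ_le s hm u (nxt s hm (Dg s hm (u+1)))) ?_
      show _ ≤ ((Dg s hm (u+1) (nxt s hm (Dg s hm (u+1))) : ℝ) + 1) / _
      gcongr
      · exact (hs _).le
      · exact_mod_cast Dg_le_succ s hm u _

lemma Dg_div_le_gg (hs : ∀ i, 0 < s i) (t : ℕ) (i : Fin m) :
    (Dg s hm t i : ℝ) / s i ≤ gg s hm t := by
  induction t with
  | zero => simp [Dg, gg]
  | succ t ih =>
      by_cases h : i = nxt s hm (Dg s hm t)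
      · have hD : Dg s hm (t+1) i = Dg s hm t i + 1 := by simp [Dg, h]
        have hg : gg s hm (t+1) = ((Dg s hm t i : ℝ) + 1) / s i := by
          rw [gg, ← h]
        rw [hD, hg]
        push_cast
        exact le_rfl
      · have : Dg s hm (t+1) i = Dg s hm t i := by simp [Dg, h]
        rw [this]
        exact le_trans ih (gg_mono_step s hm hs t)

lemma GG_eq (q : ℕ) :
    GG s hm q = ∑ i, (Dg s hm q i : ℝ) * ((Dg s hm q i : ℝ) + 1) / (2 * s i) := by
  induction q with
  | zero => simp [GG, Dg]
  | succ q ih =>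
      rw [GG, sum_range_succ, ← GG, ih]
      have key : ∀ i : Fin m, (Dg s hm (q+1) i : ℝ) * ((Dg s hm (q+1) i : ℝ) + 1) / (2 * s i)
          - (Dg s hm q i : ℝ) * ((Dg s hm q i : ℝ) + 1) / (2 * s i)
          = if i = nxt s hm (Dg s hm q) then ((Dg s hm q i : ℝ) + 1) / s i else 0 := by
        intro i
        by_cases h : i = nxt s hm (Dg s hm q)
        · have hD : Dg s hm (q+1) i = Dg s hm q i + 1 := by simp [Dg, h]
          rw [hD, if_pos h]
          push_cast
          ring
        · have hD : Dg s hm (q+1) i = Dg s hm q i := by simp [Dg, h]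
          rw [hD, if_neg h]
          ring
      have hsub : ∑ i, ((Dg s hm (q+1) i : ℝ) * ((Dg s hm (q+1) i : ℝ) + 1) / (2 * s i)
          - (Dg s hm q i : ℝ) * ((Dg s hm q i : ℝ) + 1) / (2 * s i)) = gg s hm (q+1) := by
        rw [sum_congr rfl (fun i _ => key i), sum_ite_eq' univ (nxt s hm (Dg s hm q))]
        simp [gg]
      rw [sum_sub_distrib] at hsub
      linarith

lemma A_le (hs : ∀ i, 0 < s i) (q : ℕ) :
    ∑ i, (Dg s hm q i : ℝ) / s i ≤ m * gg s hm q := by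
  calc ∑ i, (Dg s hm q i : ℝ) / s i ≤ ∑ _i : Fin m, gg s hm q :=
        sum_le_sum (fun i _ => Dg_div_le_gg s hm hs q i)
    _ = m * gg s hm q := by simp [mul_comm]

lemma A_le_GG (hs : ∀ i, 0 < s i) (q : ℕ) :
    ∑ i, (Dg s hm q i : ℝ) / s i ≤ GG s hm q := by
  rw [GG_eq]
  refine sum_le_sum (fun i _ => ?_)
  rcases Nat.eq_zero_or_pos (Dg s hm q i) with h | h
  · simp [h]
  · rw [div_le_div_iff₀ (hs i) (mul_pos two_pos (hs i))]
    have h1 : (1:ℝ) ≤ (Dg s hm q i : ℝ) := by exact_mod_cast h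
    have h2 : (2:ℝ) * (Dg s hm q i : ℝ) ≤ (Dg s hm q i : ℝ) * ((Dg s hm q i : ℝ) + 1) := by
      nlinarith
    calc (Dg s hm q i : ℝ) * (2 * s i) = (2 * (Dg s hm q i : ℝ)) * s i := by ring
      _ ≤ ((Dg s hm q i : ℝ) * ((Dg s hm q i : ℝ) + 1)) * s i :=
          mul_le_mul_of_nonneg_right h2 (hs i).le
      _ = (Dg s hm q i : ℝ) * ((Dg s hm q i : ℝ) + 1) * s i := by ring

lemma GG_min (hs : ∀ i, 0 < s i) (q : ℕ) :
    ∀ e : Fin m → ℕ, (∑ i, e i) = q →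
      GG s hm q ≤ ∑ i, (e i : ℝ) * ((e i : ℝ) + 1) / (2 * s i) := by
  induction q with
  | zero =>
      intro e he
      have : ∀ i, e i = 0 := by
        intro i
        exact (Finset.sum_eq_zero_iff.mp he) i (mem_univ i)
      simp [GG, this]
  | succ q ih =>
      intro e he
      have hex : ∃ i₀, Dg s hm q i₀ < e i₀ := by
        by_contra hc
        push_neg at hc
        have : (q+1 : ℕ) ≤ q := by
          calc (q+1:ℕ) = ∑ i, e i := he.symm
            _ ≤ ∑ i, Dg s hm q i := sum_le_sum (fun i _ => hc i)
            _ = q := Dg_sum s hm q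
        omega
      obtain ⟨i₀, hi₀⟩ := hex
      have h1 : 1 ≤ e i₀ := by omega
      set e' : Fin m → ℕ := Function.update e i₀ (e i₀ - 1) with he'
      have he'ne : ∀ i, i ≠ i₀ → e' i = e i := by
        intro i hi
        rw [he', Function.update_of_ne hi]
      have he'i₀ : e' i₀ = e i₀ - 1 := by rw [he', Function.update_self]
      have hsum' : ∑ i, e' i = q := by
        have hsplit : ∑ i, e i = ∑ i ∈ univ \ {i₀}, e i + e i₀ :=
          (sum_eq_sum_sdiff_singleton_add (mem_univ i₀) e).trans rfl
        have hsplit' : ∑ i, e' i = ∑ i ∈ univ \ {i₀}, e' i + e' i₀ :=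
          (sum_eq_sum_sdiff_singleton_add (mem_univ i₀) e').trans rfl
        have hoff : ∑ i ∈ univ \ {i₀}, e' i = ∑ i ∈ univ \ {i₀}, e i := by
          refine sum_congr rfl (fun i hi => ?_)
          rw [mem_sdiff, mem_singleton] at hi
          exact he'ne i hi.2
        omega
      have ihe' := ih e' hsum'
      have hstep : GG s hm (q+1) = GG s hm q + gg s hm (q+1) := by
        rw [GG, sum_range_succ, ← GG]
      have hgg : gg s hm (q+1) ≤ (e i₀ : ℝ) / s i₀ := by
        refine le_trans (gg_succ_le s hm q i₀) ?_
        gcongr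
        · exact (hs i₀).le
        · exact_mod_cast hi₀
      have hT : ∑ i, (e i : ℝ) * ((e i : ℝ) + 1) / (2 * s i)
          = ∑ i, (e' i : ℝ) * ((e' i : ℝ) + 1) / (2 * s i) + (e i₀ : ℝ) / s i₀ := by
        have hsplit : ∑ i, (e i : ℝ) * ((e i : ℝ) + 1) / (2 * s i)
            = ∑ i ∈ univ \ {i₀}, (e i : ℝ) * ((e i : ℝ) + 1) / (2 * s i)
              + (e i₀ : ℝ) * ((e i₀ : ℝ) + 1) / (2 * s i₀) :=
          sum_eq_sum_sdiff_singleton_add (mem_univ i₀) _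
        have hsplit' : ∑ i, (e' i : ℝ) * ((e' i : ℝ) + 1) / (2 * s i)
            = ∑ i ∈ univ \ {i₀}, (e' i : ℝ) * ((e' i : ℝ) + 1) / (2 * s i)
              + (e' i₀ : ℝ) * ((e' i₀ : ℝ) + 1) / (2 * s i₀) :=
          sum_eq_sum_sdiff_singleton_add (mem_univ i₀) _
        have hoff : ∑ i ∈ univ \ {i₀}, (e' i : ℝ) * ((e' i : ℝ) + 1) / (2 * s i)
            = ∑ i ∈ univ \ {i₀}, (e i : ℝ) * ((e i : ℝ) + 1) / (2 * s i) := by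
          refine sum_congr rfl (fun i hi => ?_)
          rw [mem_sdiff, mem_singleton] at hi
          rw [he'ne i hi.2]
        have hcast : (e' i₀ : ℝ) = (e i₀ : ℝ) - 1 := by
          rw [he'i₀, Nat.cast_sub h1, Nat.cast_one]
        have halg : (e i₀ : ℝ) * ((e i₀ : ℝ) + 1) / (2 * s i₀)
            = ((e i₀ : ℝ) - 1) * (e i₀ : ℝ) / (2 * s i₀) + (e i₀ : ℝ) / s i₀ := by
          have hne : s i₀ ≠ 0 := (hs i₀).ne'
          field_simp
          ring
        rw [hsplit, hsplit', hoff, hcast, halg]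
        ring
      rw [hstep, hT]
      exact add_le_add ihe' hgg

lemma Dg_count (t : ℕ) (i : Fin m) :
    Dg s hm t i = ((range t).filter (fun u => i = nxt s hm (Dg s hm u))).card := by
  induction t with
  | zero => simp [Dg]
  | succ t ih =>
      rw [range_add_one, filter_insert]
      by_cases h : i = nxt s hm (Dg s hm t)
      · rw [if_pos h, card_insert_of_notMem (by simp)]
        show Dg s hm t i + _ = _
        rw [if_pos h, ih]
      · rw [if_neg h]
        show Dg s hm t i + _ = _
        rw [if_neg h, ih, add_zero]

lemma A_eq_range (q : ℕ) :
    ∑ u ∈ range q, 1 / s (nxt s hm (Dg s hm u)) = ∑ i, (Dg s hm q i : ℝ) / s i := by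
  induction q with
  | zero => simp [Dg]
  | succ q ih =>
      rw [sum_range_succ, ih]
      have : ∀ i : Fin m, (Dg s hm (q+1) i : ℝ) / s i
          = (Dg s hm q i : ℝ) / s i + (if i = nxt s hm (Dg s hm q) then 1 / s i else 0) := by
        intro i
        by_cases h : i = nxt s hm (Dg s hm q)
        · have hD : Dg s hm (q+1) i = Dg s hm q i + 1 := by simp [Dg, h]
          rw [hD, if_pos h]
          push_cast
          ring
        · have hD : Dg s hm (q+1) i = Dg s hm q i := by simp [Dg, h]
          rw [hD, if_neg h, add_zero]
      rw [sum_congr rfl (fun i _ => this i), sum_add_distrib,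
        sum_ite_eq' univ (nxt s hm (Dg s hm q)) (fun i => 1 / s i)]
      simp

lemma sum_gg_range (q : ℕ) :
    ∑ u ∈ range q, gg s hm u = GG s hm q - gg s hm q := by
  have h1 : ∑ u ∈ range (q+1), gg s hm u = ∑ r ∈ range q, gg s hm (r+1) + gg s hm 0 :=
    sum_range_succ' _ _
  have h2 : ∑ u ∈ range (q+1), gg s hm u = ∑ u ∈ range q, gg s hm u + gg s hm q :=
    sum_range_succ _ _
  have : gg s hm 0 = 0 := rfl
  rw [GG]
  linarith [h1, h2]

/-- The key numeric inequality for the suffix sums. -/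
lemma key_ineq (hs : ∀ i, 0 < s i) (hm1 : (1:ℝ) ≤ m) (q : ℕ) :
    (∑ i, (Dg s hm q i : ℝ) / s i) + (GG s hm q - gg s hm q)
      ≤ (2 - 1 / (2 * (m : ℝ))) * GG s hm q := by
  set A := ∑ i, (Dg s hm q i : ℝ) / s i with hA
  have hm0 : (0:ℝ) < m := by linarith
  have hAmg : A ≤ m * gg s hm q := A_le s hm hs q
  have hAG : A ≤ GG s hm q := A_le_GG s hm hs q
  have hg0 : 0 ≤ gg s hm q := gg_nonneg s hm hs q
  have hA0 : 0 ≤ A := by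
    rw [hA]
    apply sum_nonneg
    intro i _
    exact div_nonneg (Nat.cast_nonneg _) (hs i).le
  have hc0 : (0:ℝ) ≤ 1 - 1 / (2 * (m:ℝ)) := by
    have h2m : (2:ℝ) ≤ 2 * m := by linarith
    have : 1 / (2 * (m:ℝ)) ≤ 1 / 2 := one_div_le_one_div_of_le two_pos h2m
    linarith
  have s1 : A / (2 * (m:ℝ)) ≤ gg s hm q := by
    rw [div_le_iff₀ (by positivity)]
    nlinarith
  have s2 : (1 - 1 / (2 * (m:ℝ))) * A = A - A / (2 * (m:ℝ)) := by
    ring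
  have s3 : (1 - 1 / (2 * (m:ℝ))) * A ≤ (1 - 1 / (2 * (m:ℝ))) * GG s hm q :=
    mul_le_mul_of_nonneg_left hAG hc0
  have s4 : (2 - 1 / (2 * (m : ℝ))) * GG s hm q
      = GG s hm q + (1 - 1 / (2 * (m:ℝ))) * GG s hm q := by ring
  linarith

end greedy

/-! ### Generic summation helpers -/

lemma pair_swap {n m : ℕ} (C : Fin n → Fin m → Prop) [inst : ∀ k j, Decidable (C k j)]
    (f : Fin n → Fin m → ℝ) :
    ∑ j, ∑ k ∈ univ.filter (fun k => C k j), f k j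
      = ∑ k, ∑ j ∈ univ.filter (fun j => C k j), f k j := by
  simp only [sum_filter]
  exact Finset.sum_comm

lemma suffix_reindex {M : Type*} [AddCommMonoid M] {n : ℕ} (t : ℕ) (F : ℕ → M) :
    ∑ j ∈ univ.filter (fun j : Fin n => t ≤ j.val), F (n - 1 - j.val)
      = ∑ u ∈ range (n - t), F u := by
  refine Finset.sum_bij' (fun j _ => n - 1 - j.val)
    (fun u hu => ⟨n - 1 - u, by simp only [mem_range] at hu; omega⟩) ?_ ?_ ?_ ?_ ?_
  · intro j hj
    simp only [mem_filter, mem_univ, true_and] at hj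
    have := j.isLt
    simp only [mem_range]
    omega
  · intro u hu
    simp only [mem_range] at hu
    simp only [mem_filter, mem_univ, true_and]
    omega
  · intro j hj
    simp only [mem_filter, mem_univ, true_and] at hj
    have := j.isLt
    apply Fin.ext
    simp only
    omega
  · intro u hu
    simp only [mem_range] at hu
    simp only
    omega
  · intro j hj
    rfl

lemma card_suffix {n : ℕ} (t : ℕ) :
    (univ.filter (fun j : Fin n => t ≤ j.val)).card = n - t := by
  have := suffix_reindex (M := ℕ) (n := n) t (fun _ => 1)
  simpa using this

lemma abel_bound {n : ℕ} (p a b : Fin n → ℝ) (hp : ∀ j, 0 ≤ p j) (hmono : Monotone p)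
    (h : ∀ t : ℕ, t < n →
      ∑ j ∈ univ.filter (fun j : Fin n => t ≤ j.val), a j
        ≤ ∑ j ∈ univ.filter (fun j : Fin n => t ≤ j.val), b j) :
    ∑ j, p j * a j ≤ ∑ j, p j * b j := by
  classical
  set P : ℕ → ℝ := fun u => if h : u < n then p ⟨u, h⟩ else 0 with hP
  set δ : ℕ → ℝ := fun u => if u = 0 then P 0 else P u - P (u - 1) with hδ
  have hδ_nonneg : ∀ u, u < n → 0 ≤ δ u := by
    intro u hu
    by_cases h0 : u = 0
    · simp only [hδ, h0, if_pos rfl, hP]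
      subst h0
      rw [dif_pos hu]
      exact hp _
    · simp only [hδ, if_neg h0, hP, sub_nonneg]
      have hu' : u - 1 < n := by omega
      rw [dif_pos hu, dif_pos hu']
      exact hmono (by simp only [Fin.le_def]; omega)
  have htel : ∀ k, k < n → ∑ u ∈ range (k + 1), δ u = P k := by
    intro k hk
    induction k with
    | zero => simp [hδ]
    | succ k ih =>
        rw [sum_range_succ, ih (by omega)]
        simp only [hδ, if_neg (Nat.succ_ne_zero k)]
        simp
  have hrep : ∀ j : Fin n, p j = ∑ u ∈ range (j.val + 1), δ u := by
    intro j
    rw [htel j.val j.isLt]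
    simp [hP, j.isLt]
  have expand : ∀ c : Fin n → ℝ, ∑ j, p j * c j
      = ∑ u ∈ range n, δ u * ∑ j ∈ univ.filter (fun j : Fin n => u ≤ j.val), c j := by
    intro c
    have e1 : ∀ j : Fin n, p j * c j = ∑ u ∈ range n, (if u ≤ j.val then δ u * c j else 0) := by
      intro j
      rw [hrep j, sum_mul]
      rw [← sum_filter]
      congr 1
      · ext u
        simp only [mem_range, mem_filter]
        have := j.isLt
        omega
    calc ∑ j, p j * c j = ∑ j, ∑ u ∈ range n, (if u ≤ j.val then δ u * c j else 0) := by
          exact sum_congr rfl (fun j _ => e1 j)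
      _ = ∑ u ∈ range n, ∑ j : Fin n, (if u ≤ j.val then δ u * c j else 0) := Finset.sum_comm
      _ = ∑ u ∈ range n, δ u * ∑ j ∈ univ.filter (fun j : Fin n => u ≤ j.val), c j := by
          refine sum_congr rfl (fun u _ => ?_)
          rw [mul_sum, sum_filter]
  rw [expand a, expand b]
  refine sum_le_sum (fun u hu => ?_)
  rw [mem_range] at hu
  exact mul_le_mul_of_nonneg_left (h u hu) (hδ_nonneg u hu)

/-! ### Schedule counting -/

/-- suffix machine counts of a schedule -/
def ee {n m : ℕ} (σ : Fin n → Fin m) (t : ℕ) (i : Fin m) : ℕ :=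
  (univ.filter (fun j : Fin n => t ≤ j.val ∧ σ j = i)).card

section sched
variable {n m : ℕ} (p : Fin n → ℝ) (s : Fin m → ℝ) (σ : Fin n → Fin m)

lemma sc_eq :
    socialCost p s σ = ∑ k, p k * (((psi σ (σ k) k : ℝ) + 1) / s (σ k)) := by
  classical
  have step1 : socialCost p s σ
      = ∑ j, ∑ k ∈ univ.filter (fun k => (k ≤ j ∧ σ k = σ j : Prop)), p k / s (σ k) := by
    refine sum_congr rfl (fun j _ => ?_)
    rw [completionTime, sum_div]
    refine sum_congr rfl (fun k hk => ?_)
    rw [mem_filter] at hk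
    rw [hk.2.2]
  rw [step1, pair_swap (fun k j => (k ≤ j ∧ σ k = σ j : Prop)) (fun k _ => p k / s (σ k))]
  refine sum_congr rfl (fun k _ => ?_)
  have hset : univ.filter (fun j => (k ≤ j ∧ σ k = σ j : Prop))
      = insert k (univ.filter (fun j => (k < j ∧ σ j = σ k : Prop))) := by
    ext j
    simp only [mem_filter, mem_univ, true_and, mem_insert]
    constructor
    · rintro ⟨h1, h2⟩
      rcases eq_or_lt_of_le h1 with h | h
      · left; exact h.symm
      · right; exact ⟨h, h2.symm⟩
    · rintro (h | ⟨h1, h2⟩)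
      · subst h; exact ⟨le_refl _, rfl⟩
      · exact ⟨le_of_lt h1, h2.symm⟩
  rw [hset, sum_insert (by simp), sum_const]
  have : (univ.filter (fun j => (k < j ∧ σ j = σ k : Prop))).card = psi σ (σ k) k := rfl
  rw [this]
  push_cast
  ring

lemma ee_sum (t : ℕ) : ∑ i, ee σ t i = n - t := by
  classical
  rw [← card_suffix (n := n) t]
  rw [Finset.card_eq_sum_card_fiberwise (f := σ) (t := univ) (fun x _ => mem_univ (σ x))]
  refine sum_congr rfl (fun i _ => ?_)
  rw [ee, filter_filter]

lemma suffix_b (hs : ∀ i, 0 < s i) :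
    ∀ d : ℕ, d ≤ n →
      ∑ j ∈ univ.filter (fun j : Fin n => (n - d : ℕ) ≤ j.val),
          ((psi σ (σ j) j : ℝ) + 1) / s (σ j)
        = ∑ i, (ee σ (n - d) i : ℝ) * ((ee σ (n - d) i : ℝ) + 1) / (2 * s i) := by
  classical
  intro d
  induction d with
  | zero =>
      intro _
      have h1 : univ.filter (fun j : Fin n => (n : ℕ) ≤ j.val) = (∅ : Finset (Fin n)) := by
        ext j
        simp only [mem_filter, mem_univ, true_and, notMem_empty, iff_false, not_le]
        exact j.isLt
      have h2 : ∀ i, ee σ n i = 0 := by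
        intro i
        rw [ee, card_eq_zero]
        ext j
        simp only [mem_filter, mem_univ, true_and, notMem_empty, iff_false, not_and, not_le]
        intro h
        exact absurd h (by have := j.isLt; omega)
      simp only [Nat.sub_zero]
      rw [h1]
      simp [h2]
  | succ d ih =>
      intro hd
      have hdn : d ≤ n := by omega
      set t : ℕ := n - (d+1) with ht
      have htn : t < n := by omega
      have ht1 : t + 1 = n - d := by omega
      set jt : Fin n := ⟨t, htn⟩ with hjt
      have hsplit : univ.filter (fun j : Fin n => t ≤ j.val)
          = insert jt (univ.filter (fun j : Fin n => t + 1 ≤ j.val)) := by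
        ext j
        simp only [mem_filter, mem_univ, true_and, mem_insert, Fin.ext_iff]
        constructor
        · intro h
          rcases Nat.eq_or_lt_of_le h with h' | h'
          · left; exact h'.symm
          · right; omega
        · rintro (h | h)
          · exact le_of_eq h.symm
          · omega
      have hnotmem : jt ∉ univ.filter (fun j : Fin n => t + 1 ≤ j.val) := by
        simp [hjt]
      have hpsi : psi σ (σ jt) jt = ee σ (t+1) (σ jt) := by
        rfl
      have hee : ∀ i, ee σ t i = ee σ (t+1) i + if σ jt = i then 1 else 0 := by
        intro i
        by_cases h : σ jt = i
        · rw [if_pos h, ee, ee]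
          have : univ.filter (fun j : Fin n => t ≤ j.val ∧ σ j = i)
              = insert jt (univ.filter (fun j : Fin n => t + 1 ≤ j.val ∧ σ j = i)) := by
            ext j
            simp only [mem_filter, mem_univ, true_and, mem_insert]
            constructor
            · rintro ⟨h1, h2⟩
              rcases Nat.eq_or_lt_of_le h1 with h' | h'
              · left
                apply Fin.ext
                simp [hjt]
                omega
              · right; exact ⟨by omega, h2⟩
            · rintro (h' | ⟨h1, h2⟩)
              · subst h'
                exact ⟨le_refl _, h⟩
              · exact ⟨by omega, h2⟩
          rw [this, card_insert_of_notMem (by simp [hjt])]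
        · rw [if_neg h, add_zero, ee, ee]
          congr 1
          apply filter_congr
          intro j _
          constructor
          · rintro ⟨h1, h2⟩
            refine ⟨?_, h2⟩
            rcases Nat.eq_or_lt_of_le h1 with h' | h'
            · exfalso
              apply h
              have hj : j = jt := by
                apply Fin.ext
                simp [hjt]
                omega
              rw [← hj, h2]
            · omega
          · rintro ⟨h1, h2⟩; exact ⟨by omega, h2⟩
      have key : ∀ i : Fin m,
          (ee σ t i : ℝ) * ((ee σ t i : ℝ) + 1) / (2 * s i)
            - (ee σ (t+1) i : ℝ) * ((ee σ (t+1) i : ℝ) + 1) / (2 * s i)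
          = if σ jt = i then ((ee σ (t+1) i : ℝ) + 1) / s i else 0 := by
        intro i
        by_cases h : σ jt = i
        · rw [if_pos h, hee i, if_pos h]
          have hsi : s i ≠ 0 := (hs i).ne'
          push_cast
          field_simp
          ring
        · rw [if_neg h, hee i, if_neg h, add_zero]
          ring
      have hdiff : ∑ i, (ee σ t i : ℝ) * ((ee σ t i : ℝ) + 1) / (2 * s i)
          - ∑ i, (ee σ (t+1) i : ℝ) * ((ee σ (t+1) i : ℝ) + 1) / (2 * s i)
          = ((ee σ (t+1) (σ jt) : ℝ) + 1) / s (σ jt) := by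
        rw [← sum_sub_distrib, sum_congr rfl (fun i _ => key i),
          sum_ite_eq univ (σ jt) (fun i => ((ee σ (t+1) i : ℝ) + 1) / s i)]
        simp
      have ihd := ih hdn
      rw [← ht1] at ihd
      rw [hsplit, sum_insert hnotmem, ihd, hpsi]
      push_cast
      linarith [hdiff]

end sched

lemma mu_count {n m : ℕ} (s : Fin m → ℝ) (hm : 0 < m) (k : Fin n) (i : Fin m) :
    (univ.filter (fun j : Fin n => k < j ∧ i = nxt s hm (Dg s hm (n - 1 - j.val)))).card
      = Dg s hm (n - 1 - k.val) i := by
  classical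
  have h1 : (univ.filter (fun j : Fin n => k < j ∧ i = nxt s hm (Dg s hm (n - 1 - j.val))))
      = (univ.filter (fun j : Fin n => k.val + 1 ≤ j.val)).filter
          (fun j => i = nxt s hm (Dg s hm (n - 1 - j.val))) := by
    rw [filter_filter]
    apply filter_congr
    intro j _
    rw [Fin.lt_def]
    exact Iff.rfl
  rw [h1, card_filter]
  have h2 : ∑ j ∈ univ.filter (fun j : Fin n => k.val + 1 ≤ j.val),
        (if i = nxt s hm (Dg s hm (n - 1 - j.val)) then 1 else 0)
      = ∑ u ∈ range (n - (k.val + 1)), (if i = nxt s hm (Dg s hm u) then 1 else 0) :=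
    suffix_reindex (k.val + 1) (fun u => if i = nxt s hm (Dg s hm u) then 1 else 0)
  rw [h2, ← card_filter]
  have h3 : n - (k.val + 1) = n - 1 - k.val := by omega
  rw [h3, ← Dg_count s hm (n - 1 - k.val) i]

/-- Theorem 5: for machines with divisible speeds, the pure price of anarchy for
`Q||ΣC_j` with `m` machines is at most `2 - 1/(2m)`. -/
theorem poa_divisible (n m : ℕ) (hm : 0 < m) (p : Fin n → ℝ) (s : Fin m → ℝ)
    (hp : ∀ j, 0 < p j) (hpmono : Monotone p) (hs : ∀ i, 0 < s i)
    (hdiv : ∀ i i' : Fin m, s i' ≤ s i → ∃ k : ℕ, s i / s i' = (k : ℝ))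
    (τ σ : Fin n → Fin m) (hτ : IsNash p s τ) :
    socialCost p s τ ≤ (2 - 1 / (2 * (m : ℝ))) * socialCost p s σ := by
  classical
  have hm1 : (1:ℝ) ≤ m := by exact_mod_cast hm
  set c : ℝ := 2 - 1 / (2 * (m : ℝ)) with hc
  have hc0 : (0:ℝ) ≤ c := by
    have h2m : (2:ℝ) ≤ 2 * m := by linarith
    have : 1 / (2 * (m:ℝ)) ≤ 1 / 2 := one_div_le_one_div_of_le two_pos h2m
    rw [hc]
    linarith
  set mu : Fin n → Fin m := fun j => nxt s hm (Dg s hm (n - 1 - j.val)) with hmu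
  set afun : Fin n → ℝ := fun j => 1 / s (mu j) + gg s hm (n - 1 - j.val) with hafun
  set bfun : Fin n → ℝ := fun j => ((psi σ (σ j) j : ℝ) + 1) / s (σ j) with hbfun
  -- Step 1 : Nash bound
  have step1 : socialCost p s τ ≤ ∑ j, p j * afun j := by
    have h1 : socialCost p s τ
        ≤ ∑ j, (p j + ∑ k ∈ univ.filter (fun k => k < j ∧ τ k = mu j), p k) / s (mu j) :=
      sum_le_sum (fun j _ => hτ j (mu j))
    have h2 : ∀ j : Fin n,
        (p j + ∑ k ∈ univ.filter (fun k => k < j ∧ τ k = mu j), p k) / s (mu j)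
          = p j * (1 / s (mu j))
            + ∑ k ∈ univ.filter (fun k => (k < j ∧ τ k = mu j : Prop)), p k / s (τ k) := by
      intro j
      rw [add_div, sum_div]
      congr 1
      · ring
      · refine sum_congr rfl (fun k hk => ?_)
        rw [mem_filter] at hk
        rw [hk.2.2]
    have h3 : ∑ j, ∑ k ∈ univ.filter (fun k => (k < j ∧ τ k = mu j : Prop)), p k / s (τ k)
        = ∑ k : Fin n,
            ((univ.filter (fun j : Fin n => (k < j ∧ τ k = mu j : Prop))).card : ℝ)
              * (p k / s (τ k)) := by
      rw [pair_swap (fun k j => (k < j ∧ τ k = mu j : Prop)) (fun k _ => p k / s (τ k))]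
      refine sum_congr rfl (fun k _ => ?_)
      rw [sum_const, nsmul_eq_mul]
    have h4 : ∀ k : Fin n,
        ((univ.filter (fun j : Fin n => (k < j ∧ τ k = mu j : Prop))).card : ℝ)
          = (Dg s hm (n - 1 - k.val) (τ k) : ℝ) := by
      intro k
      have := mu_count s hm k (τ k)
      rw [hmu]
      exact_mod_cast this
    have h5 : ∀ k : Fin n,
        (Dg s hm (n - 1 - k.val) (τ k) : ℝ) * (p k / s (τ k))
          ≤ p k * gg s hm (n - 1 - k.val) := by
      intro k
      have hD : (Dg s hm (n - 1 - k.val) (τ k) : ℝ) ≤ s (τ k) * gg s hm (n - 1 - k.val) := by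
        have := Dg_div_le_gg s hm hs (n - 1 - k.val) (τ k)
        rw [div_le_iff₀ (hs (τ k))] at this
        linarith [this]
      have hpk : 0 ≤ p k / s (τ k) := div_nonneg (hp k).le (hs (τ k)).le
      calc (Dg s hm (n - 1 - k.val) (τ k) : ℝ) * (p k / s (τ k))
          ≤ (s (τ k) * gg s hm (n - 1 - k.val)) * (p k / s (τ k)) :=
            mul_le_mul_of_nonneg_right hD hpk
        _ = p k * gg s hm (n - 1 - k.val) := by
            have hsk : s (τ k) ≠ 0 := (hs (τ k)).ne'
            field_simp
    calc socialCost p s τ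
        ≤ ∑ j, (p j + ∑ k ∈ univ.filter (fun k => k < j ∧ τ k = mu j), p k) / s (mu j) := h1
      _ = ∑ j, p j * (1 / s (mu j))
            + ∑ j, ∑ k ∈ univ.filter (fun k => (k < j ∧ τ k = mu j : Prop)), p k / s (τ k) := by
          rw [← sum_add_distrib]
          exact sum_congr rfl (fun j _ => h2 j)
      _ = ∑ j, p j * (1 / s (mu j))
            + ∑ k : Fin n, ((univ.filter (fun j : Fin n => (k < j ∧ τ k = mu j : Prop))).card : ℝ)
              * (p k / s (τ k)) := by rw [h3]
      _ ≤ ∑ j, p j * (1 / s (mu j)) + ∑ k, p k * gg s hm (n - 1 - k.val) := by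
          refine add_le_add_right (sum_le_sum (fun k _ => ?_)) _
          rw [h4 k]
          exact h5 k
      _ = ∑ j, p j * afun j := by
          rw [← sum_add_distrib]
          refine sum_congr rfl (fun j _ => ?_)
          rw [hafun]
          ring
  -- Step 2 : Abel summation
  have step2 : ∑ j, p j * afun j ≤ ∑ j, p j * (c * bfun j) := by
    refine abel_bound p afun (fun j => c * bfun j) (fun j => (hp j).le) hpmono ?_
    intro t htn
    set q : ℕ := n - t with hq
    -- suffix of afun
    have ha : ∑ j ∈ univ.filter (fun j : Fin n => t ≤ j.val), afun j
        = (∑ i, (Dg s hm q i : ℝ) / s i) + (GG s hm q - gg s hm q) := by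
      have hre : ∑ j ∈ univ.filter (fun j : Fin n => t ≤ j.val), afun j
          = ∑ u ∈ range (n - t), (1 / s (nxt s hm (Dg s hm u)) + gg s hm u) :=
        suffix_reindex t (fun u => 1 / s (nxt s hm (Dg s hm u)) + gg s hm u)
      rw [hre, sum_add_distrib, A_eq_range s hm, sum_gg_range s hm, hq]
    -- suffix of bfun
    have hb : GG s hm q ≤ ∑ j ∈ univ.filter (fun j : Fin n => t ≤ j.val), bfun j := by
      have hd : n - (n - t) = t := by omega
      have hsb := suffix_b s σ hs (n - t) (by omega)
      rw [hd] at hsb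
      rw [hbfun]
      rw [hsb]
      exact GG_min s hm hs q (ee σ t) (by rw [ee_sum, hq])
    have hkey := key_ineq s hm hs hm1 q
    have hcmul : ∑ j ∈ univ.filter (fun j : Fin n => t ≤ j.val), c * bfun j
        = c * ∑ j ∈ univ.filter (fun j : Fin n => t ≤ j.val), bfun j := by
      rw [mul_sum]
    rw [ha, hcmul]
    calc (∑ i, (Dg s hm q i : ℝ) / s i) + (GG s hm q - gg s hm q)
        ≤ c * GG s hm q := hkey
      _ ≤ c * ∑ j ∈ univ.filter (fun j : Fin n => t ≤ j.val), bfun j :=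
          mul_le_mul_of_nonneg_left hb hc0
  -- Step 3 : conclude
  have step3 : ∑ j, p j * (c * bfun j) = c * socialCost p s σ := by
    rw [sc_eq p s σ, mul_sum]
    refine sum_congr rfl (fun j _ => ?_)
    rw [hbfun]
    ring
  calc socialCost p s τ ≤ ∑ j, p j * afun j := step1
    _ ≤ ∑ j, p j * (c * bfun j) := step2
    _ = c * socialCost p s σ := step3
end

section
/- Let an instance of related machine scheduling have n jobs with strictly increasing positive processing times 0 < p_1 < p_2 < … < p_n and m machines with positive speeds s_1, …, s_m, and let τ* be a schedule minimizing the social cost SC. Then for every job j and every machine l: (ψ_{τ*_j}(τ*, j) + 1)/s_{τ*_j} ≥ ψ_l(τ*, j)/s_l; that is, the positional value of job j on its own machine in the optimal schedule is at least the positional value occupied by any strictly lower-priority job on any machine. -/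
open Finset

/-!
Let `k` be the first job after `j` on machine `l`, and `j'` the last job on `τ* j` before `k`.
No job strictly between `j'` and `k` runs on either of their machines, so exchanging `j'` and `k`
just swaps their positional values `v = (ψ + 1) / s`, and the social cost `∑ p_x v_x` changes by
`(p_k - p_{j'}) (v_{j'} - v_k)`. Optimality and `p_{j'} < p_k` give `v_k ≤ v_{j'}`. Finally
`v_k = ψ_l(τ*, j) / s_l` because `k` is the first job after `j` on `l`, and `v_{j'} ≤ v_j`
because `ψ` is antitone in the job.
-/

variable {n m : ℕ}

section Psi

variable (τ : Fin n → Fin m)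

lemma psi_eq_card_filter_Ioi (c : Fin m) (x : Fin n) :
    psi τ c x = #((Ioi x).filter (τ · = c)) := by
  unfold psi
  congr 1
  ext y
  simp

lemma psi_eq_add_card_filter_Ioc {a b : Fin n} (hab : a ≤ b) (c : Fin m) :
    psi τ c a = psi τ c b + #((Ioc a b).filter (τ · = c)) := by
  have hsplit : Ioi a = Ioi b ∪ Ioc a b := by
    ext y
    simp only [mem_union, mem_Ioi, mem_Ioc]
    constructor
    · intro hy
      exact (lt_or_ge b y).imp id fun h => ⟨hy, h⟩
    · rintro (hy | hy)
      exacts [hab.trans_lt hy, hy.1]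
  have hdisj : Disjoint (Ioi b) (Ioc a b) :=
    disjoint_left.2 fun y hy hy' => (mem_Ioi.1 hy).not_ge (mem_Ioc.1 hy').2
  rw [psi_eq_card_filter_Ioi, psi_eq_card_filter_Ioi, hsplit, filter_union,
    card_union_of_disjoint (disjoint_filter_filter hdisj)]

lemma psi_antitone (c : Fin m) : Antitone (psi τ c) := fun _ _ hab => by
  rw [psi_eq_add_card_filter_Ioc τ hab c]
  exact Nat.le_add_right _ _

lemma psi_eq_of_forall_Ioc_ne {a b : Fin n} (hab : a ≤ b) {c : Fin m}
    (h : ∀ y, a < y → y ≤ b → τ y ≠ c) : psi τ c a = psi τ c b := by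
  rw [psi_eq_add_card_filter_Ioc τ hab c, card_eq_zero.2, add_zero]
  exact filter_eq_empty_iff.2 fun y hy => h y (mem_Ioc.1 hy).1 (mem_Ioc.1 hy).2

lemma psi_eq_succ_of_forall_Ioo_ne {a b : Fin n} (hab : a < b) {c : Fin m} (hb : τ b = c)
    (h : ∀ y, a < y → y < b → τ y ≠ c) : psi τ c a = psi τ c b + 1 := by
  rw [psi_eq_add_card_filter_Ioc τ hab.le c, card_eq_one.2]
  refine ⟨b, eq_singleton_iff_unique_mem.2 ⟨by simp [hab, hb], fun y hy => ?_⟩⟩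
  simp only [mem_filter, mem_Ioc] at hy
  exact hy.1.2.eq_or_lt.resolve_right fun hyb => h y hy.1.1 hyb hy.2

lemma psi_comp_swap_of_lt_iff {a b x : Fin n} (h : x < a ↔ x < b) (c : Fin m) :
    psi (τ ∘ Equiv.swap a b) c x = psi τ c x := by
  rw [psi_eq_card_filter_Ioi, psi_eq_card_filter_Ioi]
  refine card_equiv (Equiv.swap a b) fun y => ?_
  simp only [mem_filter, mem_Ioi, Function.comp_apply]
  rw [Equiv.swap_apply_def]
  split_ifs with hya hyb
  · subst hya; rw [h]
  · subst hyb; rw [h]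
  · rfl

lemma psi_comp_swap_of_ne {a b : Fin n} {c : Fin m} (ha : τ a ≠ c) (hb : τ b ≠ c) (x : Fin n) :
    psi (τ ∘ Equiv.swap a b) c x = psi τ c x := by
  unfold psi
  congr 1
  ext y
  simp only [mem_filter, mem_univ, true_and, Function.comp_apply]
  rw [Equiv.swap_apply_def]
  split_ifs with hya hyb
  · subst hya; simp [ha, hb]
  · subst hyb; simp [ha, hb]
  · rfl

end Psi

lemma exists_min_gt {α : Type*} [LinearOrder α] [WellFoundedLT α] {P : α → Prop} {a : α}
    (h : ∃ y, a < y ∧ P y) : ∃ b, a < b ∧ P b ∧ ∀ y, a < y → y < b → ¬ P y := by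
  obtain ⟨b, ⟨hab, hb⟩, hmin⟩ := wellFounded_lt.has_min {y | a < y ∧ P y} h
  exact ⟨b, hab, hb, fun y hay hyb hy => hmin y ⟨hay, hy⟩ hyb⟩

lemma exists_max_Ico {α : Type*} [LinearOrder α] [WellFoundedGT α] {P : α → Prop} {a b : α}
    (ha : P a) (hab : a < b) : ∃ c, a ≤ c ∧ c < b ∧ P c ∧ ∀ y, c < y → y < b → ¬ P y := by
  obtain ⟨c, ⟨hac, hcb, hc⟩, hmax⟩ :=
    wellFounded_gt.has_min {y | a ≤ y ∧ y < b ∧ P y} ⟨a, le_rfl, hab, ha⟩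
  exact ⟨c, hac, hcb, hc, fun y hcy hyb hy => hmax y ⟨hac.trans hcy.le, hyb, hy⟩ hcy⟩

lemma sum_mul_comp_swap_sub_sum_mul {ι R : Type*} [Fintype ι] [DecidableEq ι] [CommRing R]
    (f g : ι → R) {j k : ι} (hjk : j ≠ k) :
    ∑ x, f x * g (Equiv.swap j k x) - ∑ x, f x * g x = (f k - f j) * (g j - g k) := by
  rw [← sum_sub_distrib, Fintype.sum_eq_add j k hjk fun x hx => by
    rw [Equiv.swap_apply_of_ne_of_ne hx.1 hx.2, sub_self]]
  simp only [Equiv.swap_apply_left, Equiv.swap_apply_right]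
  ring

noncomputable def positionalValue (s : Fin m → ℝ) (τ : Fin n → Fin m) (x : Fin n) : ℝ :=
  ((psi τ (τ x) x : ℝ) + 1) / s (τ x)

lemma card_filter_le_eq_psi_add_one (τ : Fin n → Fin m) (x : Fin n) :
    #(univ.filter fun y => x ≤ y ∧ τ y = τ x) = psi τ (τ x) x + 1 := by
  have hIci : univ.filter (fun y => x ≤ y ∧ τ y = τ x) = (Ici x).filter (τ · = τ x) := by
    ext y
    simp
  rw [hIci, ← Ioi_insert, filter_insert, if_pos rfl, card_insert_of_notMem (by simp),
    psi_eq_card_filter_Ioi]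

/-- Job `x` delays itself and the `psi τ (τ x) x` jobs after it on its machine. -/
lemma socialCost_eq_sum_mul_positionalValue (p : Fin n → ℝ) (s : Fin m → ℝ)
    (τ : Fin n → Fin m) : socialCost p s τ = ∑ x, p x * positionalValue s τ x := by
  unfold socialCost completionTime
  simp_rw [sum_div]
  rw [sum_comm' (t' := univ) (s' := fun x => univ.filter fun y => x ≤ y ∧ τ y = τ x)
    fun y x => by simp only [mem_filter, mem_univ, true_and]; tauto]
  refine sum_congr rfl fun x _ => ?_
  rw [sum_congr rfl fun y hy => by rw [(mem_filter.1 hy).2.2], sum_const,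
    card_filter_le_eq_psi_add_one, nsmul_eq_mul, positionalValue]
  push_cast
  ring

section Exchange

variable {τ : Fin n → Fin m} {j k : Fin n}

lemma positionalValue_comp_swap (s : Fin m → ℝ) (hjk : j < k) (hne : τ j ≠ τ k)
    (hgap : ∀ x, j < x → x < k → τ x ≠ τ j ∧ τ x ≠ τ k) :
    positionalValue s (τ ∘ Equiv.swap j k) = positionalValue s τ ∘ Equiv.swap j k := by
  funext x
  simp only [positionalValue, Function.comp_apply]
  rcases eq_or_ne j x with rfl | hjx
  · rw [Equiv.swap_apply_left]
    have hno_τk : ∀ y, j < y → y ≤ k → (τ ∘ Equiv.swap j k) y ≠ τ k := fun y hjy hyk => by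
      rcases hyk.lt_or_eq with hyk | rfl
      · rw [Function.comp_apply, Equiv.swap_apply_of_ne_of_ne hjy.ne' hyk.ne]
        exact (hgap y hjy hyk).2
      · rwa [Function.comp_apply, Equiv.swap_apply_right]
    rw [psi_eq_of_forall_Ioc_ne _ hjk.le hno_τk,
      psi_comp_swap_of_lt_iff τ (iff_of_false hjk.not_gt (lt_irrefl k))]
  rcases eq_or_ne k x with rfl | hkx
  · rw [Equiv.swap_apply_right, psi_comp_swap_of_lt_iff τ (iff_of_false hjk.not_gt (lt_irrefl k))]
    have hno_τj : ∀ y, j < y → y ≤ k → τ y ≠ τ j := fun y hjy hyk => by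
      rcases hyk.lt_or_eq with hyk | rfl
      exacts [(hgap y hjy hyk).1, hne.symm]
    rw [psi_eq_of_forall_Ioc_ne τ hjk.le hno_τj]
  rw [Equiv.swap_apply_of_ne_of_ne hjx.symm hkx.symm]
  by_cases hmid : j < x ∧ x < k
  · rw [psi_comp_swap_of_ne τ (hgap x hmid.1 hmid.2).1.symm (hgap x hmid.1 hmid.2).2.symm]
  · have hout : x < j ↔ x < k :=
      ⟨fun h => h.trans hjk, fun h => lt_of_le_of_ne (not_lt.1 fun hjx' => hmid ⟨hjx', h⟩) hjx.symm⟩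
    rw [psi_comp_swap_of_lt_iff τ hout]

lemma positionalValue_le_of_forall_socialCost_le {p : Fin n → ℝ} {s : Fin m → ℝ}
    (hp : StrictMono p) (hopt : ∀ σ : Fin n → Fin m, socialCost p s τ ≤ socialCost p s σ)
    (hjk : j < k) (hne : τ j ≠ τ k) (hgap : ∀ x, j < x → x < k → τ x ≠ τ j ∧ τ x ≠ τ k) :
    positionalValue s τ k ≤ positionalValue s τ j := by
  have hcost : socialCost p s (τ ∘ Equiv.swap j k) - socialCost p s τ =
      (p k - p j) * (positionalValue s τ j - positionalValue s τ k) := by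
    rw [socialCost_eq_sum_mul_positionalValue, socialCost_eq_sum_mul_positionalValue,
      positionalValue_comp_swap s hjk hne hgap]
    exact sum_mul_comp_swap_sub_sum_mul p _ hjk.ne
  have hcost_nonneg := sub_nonneg.2 (hopt (τ ∘ Equiv.swap j k))
  rw [hcost] at hcost_nonneg
  exact sub_nonneg.1 ((mul_nonneg_iff_of_pos_left (sub_pos.2 (hp hjk))).1 hcost_nonneg)

end Exchange

theorem opt_positional_value_general (n m : ℕ) (p : Fin n → ℝ) (s : Fin m → ℝ)
    (hpmono : StrictMono p) (hs : ∀ i, 0 < s i)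
    (τstar : Fin n → Fin m)
    (hopt : ∀ σ : Fin n → Fin m, socialCost p s τstar ≤ socialCost p s σ) :
    ∀ (j : Fin n) (l : Fin m),
      (psi τstar l j : ℝ) / s l ≤
        ((psi τstar (τstar j) j : ℝ) + 1) / s (τstar j) := by
  intro j l
  rcases eq_or_ne (τstar j) l with rfl | hl
  · exact div_le_div_of_nonneg_right (by linarith) (hs _).le
  rcases (psi τstar l j).eq_zero_or_pos with h0 | hpos
  · rw [h0, Nat.cast_zero, zero_div]
    exact div_nonneg (by positivity) (hs _).le
  have hlater : ∃ y, j < y ∧ τstar y = l := by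
    obtain ⟨y, hy⟩ := card_pos.1 hpos
    exact ⟨y, (mem_filter.1 hy).2⟩
  obtain ⟨k, hjk, hkl, hk_first⟩ := exists_min_gt hlater
  obtain ⟨j', hjj', hj'k, hj'i, hj'_last⟩ := exists_max_Ico (P := (τstar · = τstar j)) rfl hjk
  have hgap : ∀ x, j' < x → x < k → τstar x ≠ τstar j' ∧ τstar x ≠ τstar k := fun x hj'x hxk =>
    ⟨hj'i ▸ hj'_last x hj'x hxk, hkl ▸ hk_first x (hjj'.trans_lt hj'x) hxk⟩
  calc (psi τstar l j : ℝ) / s l = positionalValue s τstar k := by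
        rw [positionalValue, hkl, psi_eq_succ_of_forall_Ioo_ne τstar hjk hkl hk_first,
          Nat.cast_succ]
    _ ≤ positionalValue s τstar j' :=
        positionalValue_le_of_forall_socialCost_le hpmono hopt hj'k (hj'i.trans_ne (hkl ▸ hl)) hgap
    _ ≤ ((psi τstar (τstar j) j : ℝ) + 1) / s (τstar j) := by
        rw [positionalValue, hj'i]
        gcongr
        · exact (hs _).le
        · exact psi_antitone τstar _ hjj'

/-- Lemma 1 (optimality characterization, "only if" direction): in an optimal
schedule `τ*`, for every job `j` and every machine `l`,
`ψ_l(τ*, j)/s_l ≤ (ψ_{τ*_j}(τ*, j) + 1)/s_{τ*_j}`. -/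
theorem opt_positional_value (n m : ℕ) (p : Fin n → ℝ) (s : Fin m → ℝ)
    (hp : ∀ j, 0 < p j) (hpmono : StrictMono p) (hs : ∀ i, 0 < s i)
    (τstar : Fin n → Fin m)
    (hopt : ∀ σ : Fin n → Fin m, socialCost p s τstar ≤ socialCost p s σ) :
    ∀ (j : Fin n) (l : Fin m),
      (psi τstar l j : ℝ) / s l ≤
        ((psi τstar (τstar j) j : ℝ) + 1) / s (τstar j) :=
  opt_positional_value_general n m p s hpmono hs τstar hopt
end

section
/- Every instance of the related machine scheduling game admits a pure Nash equilibrium: for any n jobs with processing times 0 < p_1 ≤ p_2 ≤ … ≤ p_n and any m machines with positive speeds s_1, …, s_m, there exists a schedule τ such that for every job j and every machine i, C_j(τ) ≤ (p_j + Σ_{k < j, τ_k = i} p_k)/s_i. (Such an equilibrium is produced by the greedy Ibarra–Kim algorithm, which assigns jobs in SPT order, each to a machine minimizing its completion time given the previously assigned jobs.) -/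
open Finset

/-!
The equilibrium condition for job `j` only involves `j` and the jobs before it, since jobs are
processed in index order. So the Ibarra–Kim greedy schedule works: place the jobs one at a time,
each on a machine minimizing its completion time given the jobs already placed; later jobs never
change the completion times or alternatives of earlier ones.
-/

variable {n m : ℕ}

def loadBefore (p : Fin n → ℝ) (τ : Fin n → Fin m) (j : Fin n) (i : Fin m) : ℝ :=
  ∑ k ∈ univ.filter (fun k => k < j ∧ τ k = i), p k

def load (p : Fin n → ℝ) (τ : Fin n → Fin m) (i : Fin m) : ℝ :=
  ∑ k ∈ univ.filter (fun k => τ k = i), p k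

theorem completionTime_eq_loadBefore (p : Fin n → ℝ) (s : Fin m → ℝ) (τ : Fin n → Fin m)
    (j : Fin n) : completionTime p s τ j = (p j + loadBefore p τ j (τ j)) / s (τ j) := by
  have hfilter : univ.filter (fun k => k ≤ j ∧ τ k = τ j) =
      insert j (univ.filter (fun k => k < j ∧ τ k = τ j)) := by
    ext k
    simp only [mem_filter, mem_univ, true_and, mem_insert, le_iff_lt_or_eq]
    grind
  rw [completionTime, hfilter, sum_insert (by simp), loadBefore]

theorem isNash_iff (p : Fin n → ℝ) (s : Fin m → ℝ) (τ : Fin n → Fin m) :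
    IsNash p s τ ↔ ∀ j i,
      (p j + loadBefore p τ j (τ j)) / s (τ j) ≤ (p j + loadBefore p τ j i) / s i := by
  simp only [IsNash, completionTime_eq_loadBefore, loadBefore]

theorem loadBefore_snoc_castSucc (p : Fin (n + 1) → ℝ) (τ : Fin n → Fin m) (i₀ : Fin m)
    (j : Fin n) (i : Fin m) :
    loadBefore p (Fin.snoc τ i₀) j.castSucc i = loadBefore (p ∘ Fin.castSucc) τ j i := by
  rw [loadBefore, loadBefore, sum_filter, sum_filter, Fin.sum_univ_castSucc]
  simp [Fin.snoc_castSucc, (Fin.castSucc_lt_last j).le.not_gt]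

theorem loadBefore_snoc_last (p : Fin (n + 1) → ℝ) (τ : Fin n → Fin m) (i₀ i : Fin m) :
    loadBefore p (Fin.snoc τ i₀) (Fin.last n) i = load (p ∘ Fin.castSucc) τ i := by
  rw [loadBefore, load, sum_filter, sum_filter, Fin.sum_univ_castSucc]
  simp [Fin.snoc_castSucc, Fin.castSucc_lt_last]

theorem IsNash.snoc {p : Fin (n + 1) → ℝ} {s : Fin m → ℝ} {τ : Fin n → Fin m}
    (hτ : IsNash (p ∘ Fin.castSucc) s τ) {i₀ : Fin m}
    (hi₀ : ∀ i, (p (Fin.last n) + load (p ∘ Fin.castSucc) τ i₀) / s i₀ ≤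
      (p (Fin.last n) + load (p ∘ Fin.castSucc) τ i) / s i) :
    IsNash p s (Fin.snoc τ i₀) := by
  rw [isNash_iff] at hτ ⊢
  intro j i
  induction j using Fin.lastCases with
  | last => simpa only [loadBefore_snoc_last, Fin.snoc_last] using hi₀ i
  | cast j =>
    simpa only [loadBefore_snoc_castSucc, Fin.snoc_castSucc, Function.comp_apply] using hτ j i

theorem exists_isNash (hm : 0 < m) (s : Fin m → ℝ) :
    ∀ p : Fin n → ℝ, ∃ τ, IsNash p s τ := by
  induction n with
  | zero => exact fun _ => ⟨Fin.elim0, fun j => j.elim0⟩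
  | succ n ih =>
    intro p
    obtain ⟨τ, hτ⟩ := ih (p ∘ Fin.castSucc)
    obtain ⟨i₀, -, hi₀⟩ := exists_min_image univ
      (fun i => (p (Fin.last n) + load (p ∘ Fin.castSucc) τ i) / s i) ⟨⟨0, hm⟩, mem_univ _⟩
    exact ⟨Fin.snoc τ i₀, hτ.snoc fun i => hi₀ i (mem_univ i)⟩

theorem nash_exists_general (n m : ℕ) (hm : 0 < m) (p : Fin n → ℝ) (s : Fin m → ℝ) :
    ∃ τ : Fin n → Fin m, IsNash p s τ :=
  exists_isNash hm s p

/-- Every instance of the related machine scheduling game admits a pure Nash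
equilibrium (e.g. one produced by the greedy Ibarra–Kim algorithm). -/
theorem nash_exists (n m : ℕ) (hm : 0 < m) (p : Fin n → ℝ) (s : Fin m → ℝ)
    (hp : ∀ j, 0 < p j) (hpmono : Monotone p) (hs : ∀ i, 0 < s i) :
    ∃ τ : Fin n → Fin m, IsNash p s τ :=
  nash_exists_general n m hm p s
end
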